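/- arXiv:1804.08609 — 2 statements merged into one kernel-verified Lean document; each statement's English description precedes it below -/
import Mathlib

section
/- Let A ∈ ℝ^{M×N} and let T ⊆ {1,...,N}. Suppose every vector v in the kernel of A satisfies ‖v_T‖₁ < ‖v_{T^c}‖₁ whenever v ≠ 0. Then for every vector c supported on T, c is the unique minimizer of ‖z‖₁ subject to A z = A c. -/
open Finset

theorem Finset.sum_abs_lt_sum_abs_of_sum_abs_sub_lt {ι α : Type*} [Fintype ι] [DecidableEq ι]
    [AddCommGroup α] [LinearOrder α] [IsOrderedAddMonoid α] {T : Finset ι} {c z : ι → α}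
    (hc : ∀ i ∉ T, c i = 0) (h : ∑ i ∈ T, |c i - z i| < ∑ i ∈ Tᶜ, |c i - z i|) :
    ∑ i, |c i| < ∑ i, |z i| := by
  calc ∑ i, |c i| = ∑ i ∈ T, |c i| :=
        (sum_subset (subset_univ T) fun i _ hi => by rw [hc i hi, abs_zero]).symm
    _ ≤ ∑ i ∈ T, (|z i| + |c i - z i|) :=
        sum_le_sum fun i _ => sub_le_iff_le_add'.mp (abs_sub_abs_le_abs_sub (c i) (z i))
    _ < ∑ i ∈ T, |z i| + ∑ i ∈ Tᶜ, |c i - z i| := by rw [sum_add_distrib]; gcongr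
    _ = ∑ i ∈ T, |z i| + ∑ i ∈ Tᶜ, |z i| := by
        congr 1
        exact sum_congr rfl fun i hi => by rw [hc i (mem_compl.mp hi), zero_sub, abs_neg]
    _ = ∑ i, |z i| := sum_add_sum_compl T _

/-- Null space property implies ℓ¹-minimality: if every nonzero kernel vector
`v` of `A` satisfies `‖v_T‖₁ < ‖v_{Tᶜ}‖₁`, then every vector supported on `T`
is the unique ℓ¹ minimizer among solutions of `A z = A c`. -/
theorem stmt_5 {M N : ℕ} (A : Matrix (Fin M) (Fin N) ℝ) (T : Finset (Fin N))
    (hNSP : ∀ v : Fin N → ℝ, A.mulVec v = 0 → v ≠ 0 →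
      ∑ i ∈ T, |v i| < ∑ i ∈ Tᶜ, |v i|) :
    ∀ c : Fin N → ℝ, (∀ i ∉ T, c i = 0) →
      ∀ z : Fin N → ℝ, A.mulVec z = A.mulVec c → z ≠ c →
        ∑ i, |c i| < ∑ i, |z i| := by
  intro c hc z hAz hzc
  refine sum_abs_lt_sum_abs_of_sum_abs_sub_lt hc (hNSP (c - z) ?_ (sub_ne_zero.mpr hzc.symm))
  rw [Matrix.mulVec_sub, hAz, sub_self]
end

section
/- Let v ∈ ℝ^N, T ⊆ {1,...,N} with |T| = s ≥ 1, and partition T^c into consecutive blocks T₁^c, T₂^c, ... of size at most s, where T₁^c contains the s largest absolute entries of v in T^c, T₂^c the next s largest, and so on. Then the blockwise ℓ² norms satisfy Σ_{k≥2} ‖v_{T_k^c}‖₂ ≤ s^{-1/2} ‖v_{T^c}‖₁. -/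
/-!
Every entry of a block is dominated by every entry of the preceding (full) block, hence by its
average `‖v_{B k}‖₁ / s`. A block of at most `s` such entries has ℓ² norm at most
`√s · ‖v_{B k}‖₁ / s = s^{-1/2} ‖v_{B k}‖₁`, and summing over `k` uses the disjointness of the
blocks inside `Tᶜ`.
-/

open Finset

namespace Finset

variable {ι : Type*}

theorem sum_sq_le_sq_sum_abs_div_card {f : ι → ℝ} {A B : Finset ι} (hcard : #A ≤ #B)
    (hdom : ∀ i ∈ A, ∀ j ∈ B, |f i| ≤ |f j|) :
    ∑ i ∈ A, f i ^ 2 ≤ (∑ j ∈ B, |f j|) ^ 2 / #B := by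
  rcases B.eq_empty_or_nonempty with rfl | hB
  · simp [card_eq_zero.mp (Nat.le_zero.mp hcard)]
  have hB₀ : (0 : ℝ) < #B := by exact_mod_cast hB.card_pos
  have hentry : ∀ i ∈ A, (#B * |f i|) ^ 2 ≤ (∑ j ∈ B, |f j|) ^ 2 := fun i hi => by
    have h : #B • |f i| ≤ ∑ j ∈ B, |f j| := card_nsmul_le_sum _ _ _ (hdom i hi)
    rw [nsmul_eq_mul] at h
    gcongr
  rw [le_div_iff₀ hB₀]
  calc (∑ i ∈ A, f i ^ 2) * #B ≤ ∑ i ∈ A, (∑ j ∈ B, |f j|) ^ 2 / #B := by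
        rw [sum_mul]
        refine sum_le_sum fun i hi => ?_
        rw [le_div_iff₀ hB₀, ← sq_abs]
        nlinarith [hentry i hi]
    _ = #A * (∑ j ∈ B, |f j|) ^ 2 / #B := by rw [sum_const, nsmul_eq_mul, mul_div_assoc]
    _ ≤ #B * (∑ j ∈ B, |f j|) ^ 2 / #B := by gcongr
    _ = (∑ j ∈ B, |f j|) ^ 2 := by field_simp

theorem sqrt_sum_sq_le_inv_sqrt_card_mul_sum_abs {f : ι → ℝ} {A B : Finset ι}
    (hcard : #A ≤ #B) (hdom : ∀ i ∈ A, ∀ j ∈ B, |f i| ≤ |f j|) :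
    √(∑ i ∈ A, f i ^ 2) ≤ (√(#B : ℝ))⁻¹ * ∑ j ∈ B, |f j| := by
  have hsum : 0 ≤ ∑ j ∈ B, |f j| := sum_nonneg fun _ _ => abs_nonneg _
  calc √(∑ i ∈ A, f i ^ 2) ≤ √((∑ j ∈ B, |f j|) ^ 2 / #B) :=
        Real.sqrt_le_sqrt (sum_sq_le_sq_sum_abs_div_card hcard hdom)
    _ = (√(#B : ℝ))⁻¹ * ∑ j ∈ B, |f j| := by
        rw [Real.sqrt_div' _ (Nat.cast_nonneg _), Real.sqrt_sq hsum, div_eq_inv_mul]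

theorem sum_range_sum_le_of_pairwiseDisjoint [DecidableEq ι] {g : ι → ℝ} {S : Finset ι} {B : ℕ → Finset ι}
    (hg : ∀ i ∈ S, 0 ≤ g i) (hsub : ∀ k, B k ⊆ S)
    (hdisj : ∀ k l, k ≠ l → Disjoint (B k) (B l)) (n : ℕ) :
    ∑ k ∈ range n, ∑ i ∈ B k, g i ≤ ∑ i ∈ S, g i := by
  rw [← sum_biUnion fun k _ l _ hkl => hdisj k l hkl]
  exact sum_le_sum_of_subset_of_nonneg (biUnion_subset.2 fun k _ => hsub k)
    fun i hi _ => hg i hi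

end Finset

theorem stmt_8_general {N : ℕ} (v : Fin N → ℝ) (T : Finset (Fin N)) (s : ℕ)
    (B : ℕ → Finset (Fin N))
    (hsub : ∀ k, B k ⊆ Tᶜ)
    (hdisj : ∀ k l, k ≠ l → Disjoint (B k) (B l))
    (hcard : ∀ k, (B k).card ≤ s)
    (hfull : ∀ k, (B (k + 1)).Nonempty → (B k).card = s)
    (hord : ∀ k, ∀ i ∈ B (k + 1), ∀ j ∈ B k, |v i| ≤ |v j|) :
    ∑' k : ℕ, Real.sqrt (∑ i ∈ B (k + 1), v i ^ 2) ≤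
      (Real.sqrt s)⁻¹ * ∑ i ∈ Tᶜ, |v i| := by
  have hblock : ∀ k, √(∑ i ∈ B (k + 1), v i ^ 2) ≤ (√(s : ℝ))⁻¹ * ∑ j ∈ B k, |v j| := by
    intro k
    rcases (B (k + 1)).eq_empty_or_nonempty with hempty | hne
    · rw [hempty, sum_empty, Real.sqrt_zero]
      exact mul_nonneg (by positivity) (sum_nonneg fun _ _ => abs_nonneg _)
    · rw [← hfull k hne]
      exact sqrt_sum_sq_le_inv_sqrt_card_mul_sum_abs (hfull k hne ▸ hcard (k + 1)) (hord k)
  refine Real.tsum_le_of_sum_range_le (fun _ => Real.sqrt_nonneg _) fun n => ?_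
  calc ∑ k ∈ range n, √(∑ i ∈ B (k + 1), v i ^ 2)
      ≤ ∑ k ∈ range n, (√(s : ℝ))⁻¹ * ∑ j ∈ B k, |v j| := sum_le_sum fun k _ => hblock k
    _ = (√(s : ℝ))⁻¹ * ∑ k ∈ range n, ∑ j ∈ B k, |v j| := (mul_sum _ _ _).symm
    _ ≤ (√(s : ℝ))⁻¹ * ∑ i ∈ Tᶜ, |v i| := by
        gcongr
        exact sum_range_sum_le_of_pairwiseDisjoint (fun _ _ => abs_nonneg _) hsub hdisj n

/-- Blockwise estimate: partitioning `Tᶜ` into consecutive blocks of size at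
most `s`, sorted so that entries of each block dominate (in absolute value)
those of the next, with full blocks preceding nonempty blocks, the sum of the
blockwise ℓ² norms of all blocks after the first is at most
`s^{-1/2} ‖v_{Tᶜ}‖₁`. -/
theorem stmt_8 {N : ℕ} (v : Fin N → ℝ) (T : Finset (Fin N)) (s : ℕ)
    (hs : 1 ≤ s) (hT : T.card = s)
    (B : ℕ → Finset (Fin N))
    (hsub : ∀ k, B k ⊆ Tᶜ)
    (hcover : ∀ i ∈ Tᶜ, ∃ k, i ∈ B k)
    (hdisj : ∀ k l, k ≠ l → Disjoint (B k) (B l))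
    (hcard : ∀ k, (B k).card ≤ s)
    (hfull : ∀ k, (B (k + 1)).Nonempty → (B k).card = s)
    (hord : ∀ k, ∀ i ∈ B (k + 1), ∀ j ∈ B k, |v i| ≤ |v j|) :
    ∑' k : ℕ, Real.sqrt (∑ i ∈ B (k + 1), v i ^ 2) ≤
      (Real.sqrt s)⁻¹ * ∑ i ∈ Tᶜ, |v i| :=
  stmt_8_general v T s B hsub hdisj hcard hfull hord
end
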